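/- Let q(t) solve the ODE system q_n' = q_{n-1} Σ_{j=n}^{2k} q_j + q_{n+1} Σ_{j=0}^{n} q_j - q_n(1 - q_n), 0 ≤ n ≤ 2k (with q_{-1} = q_{2k+1} = 0), with q(t) in the probability simplex. Then the mean μ(t) = Σ_{n=0}^{2k} n q_n(t) is constant in time. -/

import Mathlib

/-!
Write `P i` for the mass of the sites below `i`. The equation is a conservation law
`q i' = F (i - 1) - F i` for the current `F i = q i * (1 - P (i + 1)) - q (i + 1) * P (i + 1)`
from site `i` to site `i + 1`, and `F N = 0` at the top site `N = 2k`. Summation by parts turns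
the derivative of the mean into the total current `∑ i < N, F i`, which telescopes to
`P N * (1 - P (N + 1)) = 0` because `P (N + 1) = 1`.
-/

open Finset

theorem Int.sum_Icc_eq_sum_range {M : Type*} [AddCommMonoid M] (f : ℤ → M) (a b : ℤ) :
    ∑ n ∈ Icc a b, f n = ∑ i ∈ Finset.range (b + 1 - a).toNat, f (a + i) := by
  rw [Int.Icc_eq_finset_map, sum_map]
  rfl

theorem sum_range_succ_mul_sub (F : ℕ → ℝ) (N : ℕ) :
    ∑ i ∈ range N, ((i : ℝ) + 1) * (F i - F (i + 1)) = ∑ i ∈ range N, F i - N * F N := by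
  induction N with
  | zero => simp
  | succ N ih =>
    rw [sum_range_succ, ih, sum_range_succ]
    push_cast
    ring

section MassTransport

variable (p : ℤ → ℝ)

def massBelow (i : ℕ) : ℝ := ∑ j ∈ range i, p j

def flux (i : ℕ) : ℝ :=
  p i * (1 - massBelow p (i + 1)) - p (i + 1) * massBelow p (i + 1)

noncomputable def drift (N : ℤ) (n : ℤ) : ℝ :=
  p (n - 1) * ∑ j ∈ Icc n N, p j + p (n + 1) * ∑ j ∈ Icc 0 n, p j - p n * (1 - p n)

theorem massBelow_succ (i : ℕ) : massBelow p (i + 1) = massBelow p i + p i :=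
  sum_range_succ _ _

theorem sum_Icc_zero_eq_massBelow (i : ℕ) :
    ∑ j ∈ Icc 0 (i : ℤ), p j = massBelow p (i + 1) := by
  rw [Int.sum_Icc_eq_sum_range]
  simp [massBelow]

theorem sum_Icc_eq_massBelow_sub {i N : ℕ} (hiN : i ≤ N) :
    ∑ j ∈ Icc (i : ℤ) N, p j = massBelow p (N + 1) - massBelow p i := by
  obtain ⟨m, rfl⟩ := Nat.exists_eq_add_of_le hiN
  rw [Int.sum_Icc_eq_sum_range, eq_sub_iff_add_eq', massBelow, massBelow, add_assoc,
    sum_range_add]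
  congr 1
  refine sum_congr (by congr 1; omega) fun j _ => ?_
  push_cast
  rfl

theorem sum_range_flux (M : ℕ) :
    ∑ i ∈ range M, flux p i = massBelow p M * (1 - massBelow p (M + 1)) := by
  induction M with
  | zero => simp [massBelow]
  | succ M ih =>
    rw [sum_range_succ, ih, flux, massBelow_succ p (M + 1), massBelow_succ p M]
    push_cast
    ring

theorem drift_succ {N : ℕ} (hmass : massBelow p (N + 1) = 1) {i : ℕ} (hi : i < N) :
    drift p N (i + 1) = flux p i - flux p (i + 1) := by
  have htail := sum_Icc_eq_massBelow_sub p (i := i + 1) hi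
  have hhead := sum_Icc_zero_eq_massBelow p (i + 1)
  push_cast at htail hhead
  rw [drift, htail, hhead, hmass, flux, flux, massBelow_succ p (i + 1)]
  push_cast
  rw [add_sub_cancel_right]
  ring

theorem sum_mul_drift_eq_zero (N : ℕ) (hmass : massBelow p (N + 1) = 1)
    (hout : p (N + 1) = 0) :
    ∑ n ∈ Icc 0 (N : ℤ), (n : ℝ) * drift p N n = 0 := by
  have hflux : flux p N = 0 := by simp [flux, hmass, hout]
  rw [Int.sum_Icc_eq_sum_range, show ((N : ℤ) + 1 - 0).toNat = N + 1 by omega, sum_range_succ']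
  simp only [zero_add, Nat.cast_zero, Int.cast_zero, zero_mul, add_zero]
  calc ∑ i ∈ range N, (((i + 1 : ℕ) : ℤ) : ℝ) * drift p N ((i + 1 : ℕ) : ℤ)
      = ∑ i ∈ range N, ((i : ℝ) + 1) * (flux p i - flux p (i + 1)) := by
        refine sum_congr rfl fun i hi => ?_
        push_cast
        rw [drift_succ p hmass (mem_range.mp hi)]
    _ = massBelow p N * (1 - massBelow p (N + 1)) := by
        rw [sum_range_succ_mul_sub, hflux, mul_zero, sub_zero, sum_range_flux]
    _ = 0 := by rw [hmass, sub_self, mul_zero]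

end MassTransport

theorem stmt7_general (k : ℕ) (q : ℝ → ℤ → ℝ)
    (hout : ∀ t n, (n < 0 ∨ (2*k : ℤ) < n) → q t n = 0)
    (hsum : ∀ t, ∑ n ∈ Finset.Icc (0:ℤ) (2*k), q t n = 1)
    (hode : ∀ t, ∀ n ∈ Finset.Icc (0:ℤ) (2*k),
      HasDerivAt (fun s => q s n)
        (q t (n-1) * (∑ j ∈ Finset.Icc n (2*k : ℤ), q t j)
          + q t (n+1) * (∑ j ∈ Finset.Icc (0:ℤ) n, q t j)
          - q t n * (1 - q t n)) t) :
    ∀ t₁ t₂ : ℝ,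
      ∑ n ∈ Finset.Icc (0:ℤ) (2*k), (n : ℝ) * q t₁ n
        = ∑ n ∈ Finset.Icc (0:ℤ) (2*k), (n : ℝ) * q t₂ n := by
  have hN : (2 * k : ℤ) = ((2 * k : ℕ) : ℤ) := by push_cast; rfl
  have hmean (t : ℝ) :
      HasDerivAt (fun s => ∑ n ∈ Icc (0:ℤ) (2*k), (n : ℝ) * q s n) 0 t := by
    have hmass : massBelow (q t) (2 * k + 1) = 1 := by
      rw [← sum_Icc_zero_eq_massBelow, ← hN, hsum]
    have hzero := sum_mul_drift_eq_zero (q t) (2 * k) hmass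
      (hout t _ (Or.inr (by push_cast; omega)))
    rw [← hN] at hzero
    have hterm : ∀ n ∈ Icc (0:ℤ) (2*k), HasDerivAt (fun s => (n : ℝ) * q s n)
        ((n : ℝ) * drift (q t) (2 * k) n) t := fun n hn => (hode t n hn).const_mul (n : ℝ)
    simpa only [hzero] using HasDerivAt.fun_sum hterm
  exact is_const_of_deriv_eq_zero (fun t => (hmean t).differentiableAt) fun t => (hmean t).deriv

theorem stmt7 (k : ℕ) (hk : 0 < k) (q : ℝ → ℤ → ℝ)
    (hout : ∀ t n, (n < 0 ∨ (2*k : ℤ) < n) → q t n = 0)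
    (hpos : ∀ t n, 0 ≤ q t n)
    (hsum : ∀ t, ∑ n ∈ Finset.Icc (0:ℤ) (2*k), q t n = 1)
    (hode : ∀ t, ∀ n ∈ Finset.Icc (0:ℤ) (2*k),
      HasDerivAt (fun s => q s n)
        (q t (n-1) * (∑ j ∈ Finset.Icc n (2*k : ℤ), q t j)
          + q t (n+1) * (∑ j ∈ Finset.Icc (0:ℤ) n, q t j)
          - q t n * (1 - q t n)) t) :
    ∀ t₁ t₂ : ℝ,
      ∑ n ∈ Finset.Icc (0:ℤ) (2*k), (n : ℝ) * q t₁ n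
        = ∑ n ∈ Finset.Icc (0:ℤ) (2*k), (n : ℝ) * q t₂ n :=
  stmt7_general k q hout hsum hode
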